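/- arXiv:1203.1066 — 2 statements merged into one kernel-verified Lean document; each statement's English description precedes it below -/
import Mathlib

section
/- Let a, b, c : ℝ³ → ℝ be smooth functions satisfying b + Xc = 0, −a + Θc = 0, Xa = 0, Θb = 0, and Xb + Θa + c = 0. Then Tc = 0, Tb = 0, and Ta = b. Consequently (Ta − b) = 0, Tb = 0 and Tc = 0, so the Lie bracket [T, K] = (Ta − b)X + (Tb)Θ + (Tc)T vanishes identically; hence every weak H-Killing field of the rototranslation group is a strong H-Killing field. -/
/-- The underlying space `ℝ³` (with coordinates `(x, y, θ)`) of the universal cover of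
the rototranslation group `ℝ² × S¹`. -/
abbrev Roto : Type := ℝ × ℝ × ℝ

/-- The horizontal vector field `X = cos θ ∂/∂x + sin θ ∂/∂y` acting on functions. -/
noncomputable def Xop (f : Roto → ℝ) (p : Roto) : ℝ :=
  fderiv ℝ f p (Real.cos p.2.2, Real.sin p.2.2, 0)

/-- The horizontal vector field `Θ = ∂/∂θ` acting on functions. -/
noncomputable def Θop (f : Roto → ℝ) (p : Roto) : ℝ :=
  fderiv ℝ f p (0, 0, 1)

/-- The vertical vector field `T = sin θ ∂/∂x − cos θ ∂/∂y` acting on functions. -/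
noncomputable def Tder (f : Roto → ℝ) (p : Roto) : ℝ :=
  fderiv ℝ f p (Real.sin p.2.2, -Real.cos p.2.2, 0)
namespace RotoAux

noncomputable def D (f : Roto → ℝ) (v : Roto) (q : Roto) : ℝ := fderiv ℝ f q v

lemma smoothD (f : Roto → ℝ) (hf : ContDiff ℝ (⊤ : ℕ∞) f) (v : Roto) :
    ContDiff ℝ (⊤ : ℕ∞) (D f v) :=
  (hf.fderiv_right (by simp)).clm_apply contDiff_const

lemma swapD (f : Roto → ℝ) (hf : ContDiff ℝ (⊤ : ℕ∞) f) (v w p : Roto) :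
    fderiv ℝ (D f v) p w = fderiv ℝ (D f w) p v := by
  have hsym : IsSymmSndFDerivAt ℝ f p := hf.contDiffAt.isSymmSndFDerivAt (by norm_num; exact WithTop.coe_le_coe.mpr (le_top : ((2:ℕ):ℕ∞) ≤ ⊤))
  have hd : DifferentiableAt ℝ (fderiv ℝ f) p :=
    ((hf.fderiv_right (m := 1) (WithTop.coe_le_coe.mpr (le_top : ((1+1:ℕ):ℕ∞) ≤ ⊤))).differentiable one_ne_zero).differentiableAt
  have e : ∀ u : Roto, fderiv ℝ (D f u) p = (fderiv ℝ (fderiv ℝ f) p).flip u := by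
    intro u
    have hDu : D f u = fun q => fderiv ℝ f q u := rfl
    rw [hDu, fderiv_clm_apply hd (differentiableAt_const u)]
    simp
  rw [e v, e w]
  exact hsym w v

lemma Xop_eq (f : Roto → ℝ) (q : Roto) :
    Xop f q = Real.cos q.2.2 * D f (1,0,0) q + Real.sin q.2.2 * D f (0,1,0) q := by
  have h : (Real.cos q.2.2, Real.sin q.2.2, (0:ℝ))
      = Real.cos q.2.2 • ((1:ℝ),(0:ℝ),(0:ℝ)) + Real.sin q.2.2 • ((0:ℝ),(1:ℝ),(0:ℝ)) := by
    simp [Prod.ext_iff]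
  rw [Xop, h, map_add, map_smul, map_smul, smul_eq_mul, smul_eq_mul]; rfl

lemma Tder_eq (f : Roto → ℝ) (q : Roto) :
    Tder f q = Real.sin q.2.2 * D f (1,0,0) q + (-Real.cos q.2.2) * D f (0,1,0) q := by
  have h : (Real.sin q.2.2, -Real.cos q.2.2, (0:ℝ))
      = Real.sin q.2.2 • ((1:ℝ),(0:ℝ),(0:ℝ)) + (-Real.cos q.2.2) • ((0:ℝ),(1:ℝ),(0:ℝ)) := by
    simp [Prod.ext_iff]
  rw [Tder, h, map_add, map_smul, map_smul, smul_eq_mul, smul_eq_mul]; rfl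

lemma Θop_eq (f : Roto → ℝ) : Θop f = D f (0,0,1) := rfl

lemma fderiv_mixed (f : Roto → ℝ) (hf : ContDiff ℝ (⊤ : ℕ∞) f) (A B : ℝ → ℝ) (A' B' : ℝ)
    (p w : Roto) (hA : HasDerivAt A A' p.2.2) (hB : HasDerivAt B B' p.2.2) :
    fderiv ℝ (fun q => A q.2.2 * D f (1,0,0) q + B q.2.2 * D f (0,1,0) q) p w =
      A' * w.2.2 * D f (1,0,0) p + A p.2.2 * fderiv ℝ (D f (1,0,0)) p w
      + (B' * w.2.2 * D f (0,1,0) p + B p.2.2 * fderiv ℝ (D f (0,1,0)) p w) := by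
  set L : Roto →L[ℝ] ℝ :=
    (ContinuousLinearMap.snd ℝ ℝ ℝ).comp (ContinuousLinearMap.snd ℝ ℝ (ℝ × ℝ)) with hL
  have hθ : HasFDerivAt (fun q : Roto => q.2.2) L p := L.hasFDerivAt
  have hAc : HasFDerivAt (fun q : Roto => A q.2.2) (A' • L) p :=
    hA.comp_hasFDerivAt p hθ
  have hBc : HasFDerivAt (fun q : Roto => B q.2.2) (B' • L) p :=
    hB.comp_hasFDerivAt p hθ
  have hD1 : HasFDerivAt (D f (1,0,0)) (fderiv ℝ (D f (1,0,0)) p) p :=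
    (((smoothD f hf _).differentiable (by simp)) p).hasFDerivAt
  have hD2 : HasFDerivAt (D f (0,1,0)) (fderiv ℝ (D f (0,1,0)) p) p :=
    (((smoothD f hf _).differentiable (by simp)) p).hasFDerivAt
  have h : fderiv ℝ (fun q => A q.2.2 * D f (1,0,0) q + B q.2.2 * D f (0,1,0) q) p = _ :=
    ((hAc.mul hD1).add (hBc.mul hD2)).fderiv
  rw [h]
  simp only [ContinuousLinearMap.add_apply, ContinuousLinearMap.smul_apply,
    ContinuousLinearMap.coe_comp', Function.comp_apply, ContinuousLinearMap.coe_snd',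
    smul_eq_mul, hL]
  ring

lemma comm1 (f : Roto → ℝ) (hf : ContDiff ℝ (⊤ : ℕ∞) f) (p : Roto) :
    Θop (Xop f) p - Xop (Θop f) p = -(Tder f p) := by
  have hx : Xop f = fun q => Real.cos q.2.2 * D f (1,0,0) q + Real.sin q.2.2 * D f (0,1,0) q :=
    funext fun q => Xop_eq f q
  have h1 := fderiv_mixed f hf Real.cos Real.sin _ _ p (0,0,1)
    (Real.hasDerivAt_cos _) (Real.hasDerivAt_sin _)
  have e1 : Θop (Xop f) p
      = fderiv ℝ (fun q => Real.cos q.2.2 * D f (1,0,0) q + Real.sin q.2.2 * D f (0,1,0) q)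
          p (0,0,1) := by rw [Θop, hx]
  have e2 : Xop (Θop f) p =
      Real.cos p.2.2 * fderiv ℝ (D f (0,0,1)) p (1,0,0)
      + Real.sin p.2.2 * fderiv ℝ (D f (0,0,1)) p (0,1,0) := by
    rw [Xop, Θop_eq]
    have h : (Real.cos p.2.2, Real.sin p.2.2, (0:ℝ))
        = Real.cos p.2.2 • ((1:ℝ),(0:ℝ),(0:ℝ)) + Real.sin p.2.2 • ((0:ℝ),(1:ℝ),(0:ℝ)) := by
      simp [Prod.ext_iff]
    rw [h, map_add, map_smul, map_smul, smul_eq_mul, smul_eq_mul]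
  rw [e1, h1, e2, swapD f hf (1,0,0) (0,0,1) p, swapD f hf (0,1,0) (0,0,1) p, Tder_eq]
  norm_num
  ring

lemma comm2 (f : Roto → ℝ) (hf : ContDiff ℝ (⊤ : ℕ∞) f) (p : Roto) :
    Θop (Tder f) p - Tder (Θop f) p = Xop f p := by
  have hx : Tder f = fun q => Real.sin q.2.2 * D f (1,0,0) q + (-Real.cos q.2.2) * D f (0,1,0) q :=
    funext fun q => Tder_eq f q
  have h1 := fderiv_mixed f hf Real.sin (fun x => -Real.cos x) _ _ p (0,0,1)
    (Real.hasDerivAt_sin _) ((Real.hasDerivAt_cos _).neg)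
  have e1 : Θop (Tder f) p
      = fderiv ℝ (fun q => Real.sin q.2.2 * D f (1,0,0) q + (-Real.cos q.2.2) * D f (0,1,0) q)
          p (0,0,1) := by rw [Θop, hx]
  have e2 : Tder (Θop f) p =
      Real.sin p.2.2 * fderiv ℝ (D f (0,0,1)) p (1,0,0)
      + (-Real.cos p.2.2) * fderiv ℝ (D f (0,0,1)) p (0,1,0) := by
    rw [Tder, Θop_eq]
    have h : (Real.sin p.2.2, -Real.cos p.2.2, (0:ℝ))
        = Real.sin p.2.2 • ((1:ℝ),(0:ℝ),(0:ℝ)) + (-Real.cos p.2.2) • ((0:ℝ),(1:ℝ),(0:ℝ)) := by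
      simp [Prod.ext_iff]
    rw [h, map_add, map_smul, map_smul, smul_eq_mul, smul_eq_mul]
  rw [e1, h1, e2, swapD f hf (1,0,0) (0,0,1) p, swapD f hf (0,1,0) (0,0,1) p, Xop_eq]
  norm_num
  ring

lemma comm3 (f : Roto → ℝ) (hf : ContDiff ℝ (⊤ : ℕ∞) f) (p : Roto) :
    Xop (Tder f) p = Tder (Xop f) p := by
  have hxf : Xop f = fun q => Real.cos q.2.2 * D f (1,0,0) q + Real.sin q.2.2 * D f (0,1,0) q :=
    funext fun q => Xop_eq f q
  have htf : Tder f = fun q => Real.sin q.2.2 * D f (1,0,0) q + (-Real.cos q.2.2) * D f (0,1,0) q :=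
    funext fun q => Tder_eq f q
  have h1 := fderiv_mixed f hf Real.sin (fun x => -Real.cos x) _ _ p
    (Real.cos p.2.2, Real.sin p.2.2, 0) (Real.hasDerivAt_sin _) ((Real.hasDerivAt_cos _).neg)
  have h2 := fderiv_mixed f hf Real.cos Real.sin _ _ p
    (Real.sin p.2.2, -Real.cos p.2.2, 0) (Real.hasDerivAt_cos _) (Real.hasDerivAt_sin _)
  have e1 : Xop (Tder f) p
      = fderiv ℝ (fun q => Real.sin q.2.2 * D f (1,0,0) q + (-Real.cos q.2.2) * D f (0,1,0) q)
          p (Real.cos p.2.2, Real.sin p.2.2, 0) := by rw [Xop, htf]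
  have e2 : Tder (Xop f) p
      = fderiv ℝ (fun q => Real.cos q.2.2 * D f (1,0,0) q + Real.sin q.2.2 * D f (0,1,0) q)
          p (Real.sin p.2.2, -Real.cos p.2.2, 0) := by rw [Tder, hxf]
  have expand : ∀ (v : Roto) (α β : ℝ),
      fderiv ℝ (D f v) p (α, β, 0) = α * fderiv ℝ (D f v) p (1,0,0)
        + β * fderiv ℝ (D f v) p (0,1,0) := by
    intro v α β
    have h : ((α:ℝ), (β:ℝ), (0:ℝ)) = α • ((1:ℝ),(0:ℝ),(0:ℝ)) + β • ((0:ℝ),(1:ℝ),(0:ℝ)) := by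
      simp [Prod.ext_iff]
    rw [h, map_add, map_smul, map_smul, smul_eq_mul, smul_eq_mul]
  rw [e1, h1, e2, h2,
    expand (1,0,0) (Real.cos p.2.2) (Real.sin p.2.2),
    expand (0,1,0) (Real.cos p.2.2) (Real.sin p.2.2),
    expand (1,0,0) (Real.sin p.2.2) (-Real.cos p.2.2),
    expand (0,1,0) (Real.sin p.2.2) (-Real.cos p.2.2),
    swapD f hf (0,1,0) (1,0,0) p]
  norm_num
  ring

end RotoAux

/-- If smooth coefficient functions `a, b, c` satisfy the weak H-Killing equations of the
rototranslation group, then `Tc = 0`, `Tb = 0` and `Ta = b`; hence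
`[T, K] = (Ta − b)X + (Tb)Θ + (Tc)T = 0`, so every weak H-Killing field of the
rototranslation group is a strong H-Killing field. -/
theorem rototranslation_weak_killing_is_strong
    (a b c : Roto → ℝ)
    (ha_smooth : ContDiff ℝ (⊤ : ℕ∞) a) (hb_smooth : ContDiff ℝ (⊤ : ℕ∞) b) (hc_smooth : ContDiff ℝ (⊤ : ℕ∞) c)
    (h1 : ∀ p, b p + Xop c p = 0)
    (h2 : ∀ p, -(a p) + Θop c p = 0)
    (h3 : ∀ p, Xop a p = 0)
    (h4 : ∀ p, Θop b p = 0)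
    (h5 : ∀ p, Xop b p + Θop a p + c p = 0) :
    (∀ p, Tder c p = 0) ∧ (∀ p, Tder b p = 0) ∧ (∀ p, Tder a p = b p) := by
  have ha : a = Θop c := funext fun p => by have := h2 p; linarith
  have hb : b = fun p => -(Xop c p) := funext fun p => by have := h1 p; linarith
  have hneg : ∀ (g : Roto → ℝ) (p v : Roto),
      fderiv ℝ (fun q => -(g q)) p v = -(fderiv ℝ g p v) := by
    intro g p v
    rw [fderiv_fun_neg]
    simp
  have hTc : ∀ p, Tder c p = 0 := by
    intro p
    have hΘX : Θop (Xop c) p = 0 := by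
      have h := h4 p
      rw [hb] at h
      rw [Θop] at h ⊢
      rw [hneg (Xop c) p (0,0,1)] at h
      linarith
    have hXΘ : Xop (Θop c) p = 0 := by rw [← ha]; exact h3 p
    have := RotoAux.comm1 c hc_smooth p
    rw [hΘX, hXΘ] at this
    linarith
  have hTc0 : Tder c = fun _ => (0:ℝ) := funext hTc
  have hzero : ∀ p v : Roto, fderiv ℝ (fun _ : Roto => (0:ℝ)) p v = 0 := by
    intro p v
    rw [fderiv_fun_const]
    simp
  refine ⟨hTc, ?_, ?_⟩
  · intro p
    have hc3 := RotoAux.comm3 c hc_smooth p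
    have : Tder b p = -(Tder (Xop c) p) := by
      rw [hb, Tder, hneg (Xop c) p _, Tder]
    rw [this, ← hc3, Xop, hTc0, hzero]
    simp
  · intro p
    have hc2 := RotoAux.comm2 c hc_smooth p
    have hΘT : Θop (Tder c) p = 0 := by rw [Θop, hTc0, hzero]
    have hTa : Tder a p = Tder (Θop c) p := by rw [ha]
    have hbp : b p = -(Xop c p) := by rw [hb]
    rw [hTa, hbp]
    linarith
end

section
/- Each of the three coefficient triples (a, b, c) = (cos θ, 0, sin θ), (a, b, c) = (sin θ, 0, −cos θ), and (a, b, c) = (x sin θ − y cos θ, 1, −(y sin θ + x cos θ)) satisfies the equations b + Xc = 0, −a + Θc = 0, Xa = 0, Θb = 0, and Xb + Θa + c = 0 on ℝ³. Hence the right-invariant vector fields X̂ = cos θ · X + sin θ · T, Ŷ = sin θ · X − cos θ · T, and Θ̂ = Θ + (x sin θ − y cos θ)X − (y sin θ + x cos θ)T are H-Killing fields of the rototranslation group. -/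
/-- The weak H-Killing equations for `K = aX + bΘ + cT` on the rototranslation group. -/
def IsWeakKilling (a b c : Roto → ℝ) : Prop :=
  (∀ p, b p + Xop c p = 0) ∧ (∀ p, -(a p) + Θop c p = 0) ∧
    (∀ p, Xop a p = 0) ∧ (∀ p, Θop b p = 0) ∧ (∀ p, Xop b p + Θop a p + c p = 0)

noncomputable def Lθ : Roto →L[ℝ] ℝ :=
  (ContinuousLinearMap.snd ℝ ℝ ℝ).comp (ContinuousLinearMap.snd ℝ ℝ (ℝ × ℝ))

noncomputable def Lx : Roto →L[ℝ] ℝ := ContinuousLinearMap.fst ℝ ℝ (ℝ × ℝ)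

noncomputable def Ly : Roto →L[ℝ] ℝ :=
  (ContinuousLinearMap.fst ℝ ℝ ℝ).comp (ContinuousLinearMap.snd ℝ ℝ (ℝ × ℝ))

lemma hθ (p : Roto) : HasFDerivAt (fun q : Roto => q.2.2) Lθ p :=
  (hasFDerivAt_snd).comp p hasFDerivAt_snd

lemma hx' (p : Roto) : HasFDerivAt (fun q : Roto => q.1) Lx p := hasFDerivAt_fst

lemma hy' (p : Roto) : HasFDerivAt (fun q : Roto => q.2.1) Ly p :=
  (hasFDerivAt_fst).comp p hasFDerivAt_snd

lemma hsin (p : Roto) :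
    HasFDerivAt (fun q : Roto => Real.sin q.2.2) (Real.cos p.2.2 • Lθ) p :=
  HasDerivAt.comp_hasFDerivAt (h₂ := Real.sin) p (Real.hasDerivAt_sin p.2.2) (hθ p)

lemma hcos (p : Roto) :
    HasFDerivAt (fun q : Roto => Real.cos q.2.2) ((-Real.sin p.2.2) • Lθ) p :=
  HasDerivAt.comp_hasFDerivAt (h₂ := Real.cos) p (Real.hasDerivAt_cos p.2.2) (hθ p)

lemma rd_sin (p v : Roto) :
    fderiv ℝ (fun q : Roto => Real.sin q.2.2) p v = Real.cos p.2.2 * v.2.2 := by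
  rw [(hsin p).fderiv]; simp [Lθ]

lemma rd_cos (p v : Roto) :
    fderiv ℝ (fun q : Roto => Real.cos q.2.2) p v = -Real.sin p.2.2 * v.2.2 := by
  rw [(hcos p).fderiv]; simp [Lθ]

lemma rd_negcos (p v : Roto) :
    fderiv ℝ (fun q : Roto => -Real.cos q.2.2) p v = Real.sin p.2.2 * v.2.2 := by
  rw [HasFDerivAt.fderiv (f := fun q : Roto => -Real.cos q.2.2) ((hcos p).neg)]; simp [Lθ]

lemma rd_a3 (p v : Roto) :
    fderiv ℝ (fun q : Roto => q.1 * Real.sin q.2.2 - q.2.1 * Real.cos q.2.2) p v =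
      v.1 * Real.sin p.2.2 + p.1 * (Real.cos p.2.2 * v.2.2)
        - (v.2.1 * Real.cos p.2.2 + p.2.1 * (-Real.sin p.2.2 * v.2.2)) := by
  rw [HasFDerivAt.fderiv (f := fun q : Roto => q.1 * Real.sin q.2.2 - q.2.1 * Real.cos q.2.2)
    (((hx' p).mul (hsin p)).sub ((hy' p).mul (hcos p)))]
  simp [Lθ, Lx, Ly]; ring

lemma rd_c3 (p v : Roto) :
    fderiv ℝ (fun q : Roto => -(q.2.1 * Real.sin q.2.2 + q.1 * Real.cos q.2.2)) p v =
      -(v.2.1 * Real.sin p.2.2 + p.2.1 * (Real.cos p.2.2 * v.2.2)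
        + (v.1 * Real.cos p.2.2 + p.1 * (-Real.sin p.2.2 * v.2.2))) := by
  rw [HasFDerivAt.fderiv (f := fun q : Roto => -(q.2.1 * Real.sin q.2.2 + q.1 * Real.cos q.2.2))
    ((((hy' p).mul (hsin p)).add ((hx' p).mul (hcos p))).neg)]
  simp [Lθ, Lx, Ly]; ring

/-- The coefficient triples of the right-invariant vector fields
`X̂ = cos θ · X + sin θ · T`, `Ŷ = sin θ · X − cos θ · T` and
`Θ̂ = Θ + (x sin θ − y cos θ)X − (y sin θ + x cos θ)T` each satisfy the H-Killing equations;
hence they are H-Killing fields of the rototranslation group. -/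
theorem rototranslation_right_invariant_killing :
    IsWeakKilling (fun p => Real.cos p.2.2) (fun _ => 0) (fun p => Real.sin p.2.2) ∧
      IsWeakKilling (fun p => Real.sin p.2.2) (fun _ => 0) (fun p => -Real.cos p.2.2) ∧
      IsWeakKilling (fun p => p.1 * Real.sin p.2.2 - p.2.1 * Real.cos p.2.2) (fun _ => 1)
        (fun p => -(p.2.1 * Real.sin p.2.2 + p.1 * Real.cos p.2.2)) := by
  refine ⟨⟨?_, ?_, ?_, ?_, ?_⟩, ⟨?_, ?_, ?_, ?_, ?_⟩, ⟨?_, ?_, ?_, ?_, ?_⟩⟩ <;>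
    intro p <;>
    simp only [Xop, Θop, rd_sin, rd_cos, rd_negcos, rd_a3, rd_c3] <;>
    simp <;> (first | ring1 | nlinarith [Real.sin_sq_add_cos_sq p.2.2])
end
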